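/- arXiv:1511.03247 — 8 statements merged into one kernel-verified Lean document; each statement's English description precedes it below -/
import Mathlib

section
/- Let n be a nonnegative integer, m ≥ 1 an integer, f : ℝ → ℝ a 2m-times continuously differentiable function, and F : ℝ → ℝ an antiderivative of f (i.e., F′(x) = f(x) for all real x). Then ∑_{k=0}^{n−1} f(k) = A_m − R_m, where A_m := ∑_{j=1}^{m} γ_{m,j} ∑_{i=0}^{j−1} (F(n−1+j/2−i) − F(i−j/2)) and R_m := (1/((2m−1)!·2^{2m+1})) · ∫_0^1 (1−s)^{2m−1} (∫_{−1}^{1} v^{2m} · ∑_{j=1}^{m} γ_{m,j} j^{2m+1} · (∑_{k=0}^{n−1} f^{(2m)}(k + j·s·v/2)) dv) ds. -/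
/-- The coefficients `γ_{m,j} := (−1)^{j−1} · (2/j) · C(2m, m+j) / C(2m, m)`. -/
noncomputable def altGamma (m j : ℕ) : ℝ :=
  (-1 : ℝ) ^ (j - 1) * (2 / (j : ℝ)) * ((2 * m).choose (m + j) : ℝ) / ((2 * m).choose m : ℝ)

/-- The remainder `R_m` of the alternative (Alt) summation formula. -/
noncomputable def altR (m n : ℕ) (f : ℝ → ℝ) : ℝ :=
  1 / (((2 * m - 1).factorial : ℝ) * 2 ^ (2 * m + 1)) *
    ∫ s in (0 : ℝ)..1, (1 - s) ^ (2 * m - 1) *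
      ∫ v in (-1 : ℝ)..1, v ^ (2 * m) *
        ∑ j ∈ Finset.Icc 1 m, altGamma m j * (j : ℝ) ^ (2 * m + 1) *
          ∑ k ∈ Finset.range n, iteratedDeriv (2 * m) f ((k : ℝ) + (j : ℝ) * s * v / 2)

open Finset intervalIntegral Set
open scoped Nat Interval

/-!
Integrating Taylor's formula with integral remainder for `f` at `x` over `[x - h, x + h]` writes
`F (x + h) - F (x - h)` as `∑_{q < 2m} f⁽q⁾(x) h^(q+1) / q! · ∫_{-1}^{1} v^q dv` plus a double
integral of `f⁽²ᵐ⁾`. Only even `q = 2p` survive, and for `p < m` the coefficients satisfy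
`∑_j γ_{m,j} j^(2p+1) = [p = 0]`: pairing `k` with `2m - k`, this is the vanishing of the `2m`-th
finite difference of `k ↦ (k - m)^(2p)`. So at `h = j/2` the combination `∑_j γ_{m,j} (…)` leaves
`f x` and the remainder. Applied to `y ↦ ∑_{k<n} f (k + y)` at `y = 0`, with the telescoping
`∑_{k<n} (F (k + j/2) - F (k - j/2)) = ∑_{i<j} (F (n - 1 + j/2 - i) - F (i - j/2))`, this is the
summation formula.
-/

theorem taylor_integral_remainder_unitInterval {f : ℝ → ℝ} {n : ℕ} (hf : ContDiff ℝ (n + 1) f)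
    (x h : ℝ) :
    f (x + h) = ∑ q ∈ range (n + 1), iteratedDeriv q f x * h ^ q / q ! +
      h ^ (n + 1) / n ! * ∫ s in (0 : ℝ)..1, (1 - s) ^ n * iteratedDeriv (n + 1) f (x + s * h) := by
  rcases eq_or_ne h 0 with rfl | hh
  · simp [sum_range_succ']
  have hU : UniqueDiffOn ℝ [[x, x + h]] := uniqueDiffOn_uIcc (by simpa using hh)
  have hD : ∀ k ≤ n + 1, ∀ t ∈ [[x, x + h]],
      iteratedDerivWithin k f [[x, x + h]] t = iteratedDeriv k f t := fun k hk t ht =>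
    iteratedDerivWithin_eq_iteratedDeriv hU (hf.contDiffAt.of_le (by exact_mod_cast hk)) ht
  have hT := taylor_integral_remainder (x₀ := x) (x := x + h) hf.contDiffOn
  rw [taylor_within_apply, integral_congr fun t ht => by rw [hD _ le_rfl t ht] ] at hT
  have hsub := smul_integral_comp_mul_add (a := 0) (b := 1)
    (fun t => (x + h - t) ^ n / n ! * iteratedDeriv (n + 1) f t) h x
  simp only [mul_zero, zero_add, mul_one, smul_eq_mul, add_comm h x] at hsub hT
  rw [← hsub, sub_eq_iff_eq_add'] at hT
  rw [hT]
  congr 1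
  · refine sum_congr rfl fun q hq => ?_
    rw [hD q (by simp at hq; omega) x left_mem_uIcc, add_sub_cancel_left]
    ring
  · rw [← integral_const_mul, ← integral_const_mul]
    refine integral_congr fun s _ => ?_
    rw [show x + h - (h * s + x) = h * (1 - s) by ring, show h * s + x = x + s * h by ring,
      mul_pow, pow_succ]
    ring

theorem sub_eq_integral_of_hasDerivAt {f F : ℝ → ℝ} (hf : Continuous f)
    (hF : ∀ x, HasDerivAt F (f x) x) (x h : ℝ) :
    F (x + h) - F (x - h) = ∫ v in (-1 : ℝ)..1, h * f (x + v * h) := by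
  have hderiv (v : ℝ) : HasDerivAt (fun v => F (x + v * h)) (h * f (x + v * h)) v := by
    rw [mul_comm h]
    exact (hF _).comp v ((hasDerivAt_mul_const h).const_add x)
  rw [integral_eq_sub_of_hasDerivAt (fun v _ => hderiv v)
    (Continuous.intervalIntegrable (by fun_prop) _ _)]
  simp [sub_eq_add_neg]

theorem integral_mul_integral_mul_swap {w u : ℝ → ℝ} {g : ℝ → ℝ → ℝ} (hw : Continuous w)
    (hu : Continuous u) (hg : Continuous (Function.uncurry g)) (a b c d : ℝ) :
    ∫ v in c..d, u v * ∫ s in a..b, w s * g s v = ∫ s in a..b, w s * ∫ v in c..d, u v * g s v := by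
  simp_rw [← integral_const_mul, ← mul_assoc, mul_comm (u _) (w _)]
  refine (MeasureTheory.intervalIntegral_intervalIntegral_swap ?_).symm
  refine (ContinuousOn.integrableOn_compact (isCompact_uIcc.prod isCompact_uIcc) ?_).mono_set
    (prod_mono uIoc_subset_uIcc uIoc_subset_uIcc)
  exact Continuous.continuousOn (by fun_prop)

theorem sub_eq_sum_moments_add_integral_remainder {f F : ℝ → ℝ} {n : ℕ} (hf : ContDiff ℝ (n + 1) f)
    (hF : ∀ x, HasDerivAt F (f x) x) (x h : ℝ) :
    F (x + h) - F (x - h) =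
      ∑ q ∈ range (n + 1), iteratedDeriv q f x * h ^ (q + 1) / q ! * (∫ v in (-1 : ℝ)..1, v ^ q) +
      h ^ (n + 2) / n ! * ∫ s in (0 : ℝ)..1, (1 - s) ^ n *
        ∫ v in (-1 : ℝ)..1, v ^ (n + 1) * iteratedDeriv (n + 1) f (x + s * (v * h)) := by
  have hD : Continuous (iteratedDeriv (n + 1) f) := hf.continuous_iteratedDeriv _ le_rfl
  set R : ℝ → ℝ := fun v =>
    ∫ s in (0 : ℝ)..1, (1 - s) ^ n * iteratedDeriv (n + 1) f (x + s * (v * h))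
  have hR : Continuous R := continuous_parametric_intervalIntegral_of_continuous' (by fun_prop) _ _
  have hexpand (v : ℝ) : h * f (x + v * h) =
      ∑ q ∈ range (n + 1), iteratedDeriv q f x * h ^ (q + 1) / q ! * v ^ q +
        h ^ (n + 2) / n ! * (v ^ (n + 1) * R v) := by
    rw [taylor_integral_remainder_unitInterval hf x (v * h), mul_add, mul_sum]
    simp only [R, mul_pow, pow_succ]
    congr 1
    · exact sum_congr rfl fun q _ => by ring
    · ring
  rw [sub_eq_integral_of_hasDerivAt hf.continuous hF, integral_congr fun v _ => hexpand v,
    integral_add (Continuous.intervalIntegrable (by fun_prop) _ _)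
      (Continuous.intervalIntegrable (by fun_prop) _ _),
    integral_finsetSum fun q _ => Continuous.intervalIntegrable (by fun_prop) _ _,
    integral_const_mul]
  simp_rw [integral_const_mul]
  rw [integral_mul_integral_mul_swap (by fun_prop) (by fun_prop) (by fun_prop)]

theorem alternating_sum_choose_mul_pow_eq_zero {R : Type*} [CommRing R] {N d : ℕ} (hd : d < N)
    (y : R) : ∑ k ∈ range (N + 1), (-1 : R) ^ k * N.choose k * (k + y) ^ d = 0 := by
  have h := fwdDiff_iter_eq_sum_shift (1 : R) (fun r => r ^ d) N y
  rw [fwdDiff_iter_pow_eq_zero_of_lt hd, Pi.zero_apply, eq_comm] at h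
  have hsign : ∀ k ∈ range (N + 1), (-1 : R) ^ k * N.choose k * (k + y) ^ d =
      (-1) ^ N * (((-1 : ℤ) ^ (N - k) * N.choose k) • (y + k • (1 : R)) ^ d) := by
    intro k hk
    have hpow : (-1 : R) ^ N * (-1) ^ (N - k) = (-1) ^ k := by
      rw [← pow_add, show N + (N - k) = k + 2 * (N - k) by simp at hk; omega, pow_add, pow_mul]
      simp
    rw [zsmul_eq_mul, nsmul_one]
    push_cast
    linear_combination (-(N.choose k : R) * (k + y) ^ d) * hpow
  rw [sum_congr rfl hsign, ← mul_sum, h, mul_zero]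

theorem sum_range_neg_one_pow_mul_choose_mul_pow {m p : ℕ} (hp : p < m) :
    ∑ k ∈ range m, (-1 : ℝ) ^ k * (2 * m).choose (m + 1 + k) * ((k : ℝ) + 1) ^ (2 * p) =
      (2 * m).choose m * 0 ^ (2 * p) / 2 := by
  set g : ℕ → ℝ := fun k => (-1) ^ k * (2 * m).choose k * (k + -(m : ℝ)) ^ (2 * p)
  have hzero : ∑ k ∈ range (2 * m + 1), g k = 0 :=
    alternating_sum_choose_mul_pow_eq_zero (by omega) _
  have hsymm : ∀ k ∈ range m, g (m - 1 - k) = g (m + 1 + k) := by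
    intro k hk
    have hkm : k < m := mem_range.mp hk
    have hchoose : (2 * m).choose (m - 1 - k) = (2 * m).choose (m + 1 + k) :=
      Nat.choose_symm_of_eq_add (by omega)
    have hsign : (-1 : ℝ) ^ (m + 1 + k) = (-1) ^ (m - 1 - k) := by
      rw [show m + 1 + k = (m - 1 - k) + 2 * (k + 1) by omega, pow_add, pow_mul]
      simp
    simp only [g, hchoose, hsign, Nat.cast_sub (by omega : k ≤ m - 1),
      Nat.cast_sub (by omega : 1 ≤ m)]
    push_cast
    rw [pow_mul, pow_mul]
    ring
  have hsplit : ∑ k ∈ range (2 * m + 1), g k = g m + 2 * ∑ k ∈ range m, g (m + 1 + k) := by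
    rw [show 2 * m + 1 = (m + 1) + m by ring, sum_range_add, sum_range_succ,
      ← sum_range_reflect, sum_congr rfl hsymm]
    ring
  have hshift : ∀ k ∈ range m, g (m + 1 + k) =
      -(-1) ^ m * ((-1) ^ k * (2 * m).choose (m + 1 + k) * ((k : ℝ) + 1) ^ (2 * p)) := by
    intro k _
    simp only [g, pow_add]
    push_cast
    ring
  rw [hsplit, sum_congr rfl hshift, ← mul_sum] at hzero
  simp only [g, add_neg_cancel] at hzero
  refine mul_left_cancel₀ (pow_ne_zero m (by norm_num : (-1 : ℝ) ≠ 0)) ?_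
  linear_combination (-1 / 2 : ℝ) * hzero

theorem sum_altGamma_mul_pow {m p : ℕ} (hp : p < m) :
    ∑ j ∈ Icc 1 m, altGamma m j * (j : ℝ) ^ (2 * p + 1) = if p = 0 then 1 else 0 := by
  have hC : ((2 * m).choose m : ℝ) ≠ 0 := by
    exact_mod_cast (Nat.choose_pos (by omega : m ≤ 2 * m)).ne'
  have hγ : ∀ k ∈ range m, altGamma m (1 + k) * ((1 + k : ℕ) : ℝ) ^ (2 * p + 1) =
      2 / (2 * m).choose m * ((-1) ^ k * (2 * m).choose (m + 1 + k) * ((k : ℝ) + 1) ^ (2 * p)) := by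
    intro k _
    simp only [altGamma, Nat.add_sub_cancel_left, ← add_assoc]
    push_cast
    field_simp
    ring
  rw [← Finset.Ico_add_one_right_eq_Icc, sum_Ico_eq_sum_range, Nat.add_sub_cancel,
    sum_congr rfl hγ, ← mul_sum, sum_range_neg_one_pow_mul_choose_mul_pow hp]
  rcases eq_or_ne p 0 with rfl | hp0
  · simp [hC]
  · simp [hp0]

theorem sum_altGamma_mul_half_pow_mul_integral_pow {m q : ℕ} (hq : q < 2 * m) :
    (∑ j ∈ Icc 1 m, altGamma m j * ((j : ℝ) / 2) ^ (q + 1)) * ∫ v in (-1 : ℝ)..1, v ^ q =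
      if q = 0 then 1 else 0 := by
  simp_rw [div_pow, ← mul_div_assoc, ← sum_div, integral_pow]
  obtain ⟨p, rfl | rfl⟩ := Nat.even_or_odd' q
  · rw [sum_altGamma_mul_pow (by omega)]
    rcases eq_or_ne p 0 with rfl | hp0
    · norm_num
    · simp [hp0]
  · rw [show 2 * p + 1 + 1 = 2 * (p + 1) by ring, pow_mul]
    simp

theorem integral_mul_integral_mul_sum {ι : Type*} (t : Finset ι) (r : ι → ℝ) {w u : ℝ → ℝ}
    {g : ι → ℝ → ℝ → ℝ} (hw : Continuous w) (hu : Continuous u)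
    (hg : ∀ i ∈ t, Continuous (Function.uncurry (g i))) (a b c d : ℝ) :
    ∫ s in a..b, w s * ∫ v in c..d, u v * ∑ i ∈ t, r i * g i s v =
      ∑ i ∈ t, r i * ∫ s in a..b, w s * ∫ v in c..d, u v * g i s v := by
  have hinner (s : ℝ) : ∫ v in c..d, u v * ∑ i ∈ t, r i * g i s v =
      ∑ i ∈ t, r i * ∫ v in c..d, u v * g i s v := by
    simp_rw [mul_sum, mul_left_comm (u _)]
    rw [integral_finsetSum fun i hi => Continuous.intervalIntegrable
      (by have := hg i hi; fun_prop) _ _]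
    simp_rw [integral_const_mul]
  simp_rw [hinner, mul_sum, mul_left_comm (w _)]
  rw [integral_finsetSum fun i hi => Continuous.intervalIntegrable (by
    have := continuous_parametric_intervalIntegral_of_continuous' (μ := MeasureTheory.volume)
      (f := fun s v => u v * g i s v) (by have := hg i hi; fun_prop) c d
    fun_prop) _ _]
  simp_rw [integral_const_mul]

theorem alt_formula_at {m : ℕ} (hm : 1 ≤ m) {f F : ℝ → ℝ} (hf : ContDiff ℝ (2 * m : ℕ) f)
    (hF : ∀ x, HasDerivAt F (f x) x) (x : ℝ) :
    f x = ∑ j ∈ Icc 1 m, altGamma m j * (F (x + j / 2) - F (x - j / 2)) -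
      1 / ((2 * m - 1)! * 2 ^ (2 * m + 1)) * ∫ s in (0 : ℝ)..1, (1 - s) ^ (2 * m - 1) *
        ∫ v in (-1 : ℝ)..1, v ^ (2 * m) * ∑ j ∈ Icc 1 m,
          altGamma m j * (j : ℝ) ^ (2 * m + 1) * iteratedDeriv (2 * m) f (x + j * s * v / 2) := by
  obtain ⟨n, hn⟩ : ∃ n, 2 * m = n + 1 := ⟨2 * m - 1, by omega⟩
  rw [show 2 * m - 1 = n by omega]
  rw [hn] at hf ⊢
  have hD : Continuous (iteratedDeriv (n + 1) f) := hf.continuous_iteratedDeriv _ le_rfl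
  have hmoments : ∑ j ∈ Icc 1 m, altGamma m j * ∑ q ∈ range (n + 1),
      iteratedDeriv q f x * ((j : ℝ) / 2) ^ (q + 1) / q ! * (∫ v in (-1 : ℝ)..1, v ^ q) = f x := by
    have hterm : ∀ q ∈ range (n + 1), ∑ j ∈ Icc 1 m, altGamma m j *
        (iteratedDeriv q f x * ((j : ℝ) / 2) ^ (q + 1) / q ! * (∫ v in (-1 : ℝ)..1, v ^ q)) =
          iteratedDeriv q f x / q ! * if q = 0 then 1 else 0 := by
      intro q hq
      rw [← sum_altGamma_mul_half_pow_mul_integral_pow (m := m) (by simp at hq; omega), sum_mul,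
        mul_sum]
      exact sum_congr rfl fun j _ => by ring
    simp_rw [mul_sum]
    rw [sum_comm, sum_congr rfl hterm]
    simp
  have harg (j : ℕ) (s v : ℝ) : x + s * (v * ((j : ℝ) / 2)) = x + j * s * v / 2 := by ring
  rw [integral_mul_integral_mul_sum _ _ (by fun_prop) (by fun_prop) fun j _ => by fun_prop]
  simp_rw [sub_eq_sum_moments_add_integral_remainder hf hF, mul_add, sum_add_distrib, hmoments,
    harg]
  rw [add_sub_assoc, left_eq_add, sub_eq_zero, mul_sum]
  refine sum_congr rfl fun j _ => ?_
  rw [div_pow, show n + 1 + 1 = n + 2 by ring]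
  ring

theorem sum_range_sub_eq_sum_range_sub (G : ℝ → ℝ) (n j : ℕ) :
    ∑ k ∈ range n, (G (k + j / 2) - G (k - j / 2)) =
      ∑ i ∈ range j, (G (n - 1 + j / 2 - i) - G (i - j / 2)) := by
  induction n with
  | zero =>
    rw [sum_range_zero, eq_comm, sum_sub_distrib, sub_eq_zero, ← sum_range_reflect]
    refine sum_congr rfl fun i hi => ?_
    rw [Nat.cast_sub (by simp at hi; omega), Nat.cast_sub (by simp at hi; omega)]
    push_cast
    ring_nf
  | succ n ih =>
    have htel : ∑ i ∈ range j, (G (n + j / 2 - i) - G (n - 1 + j / 2 - i)) =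
        G (n + j / 2) - G (n - j / 2) := by
      convert sum_range_sub' (fun i : ℕ => G (n + j / 2 - i)) j using 3 <;> push_cast <;> ring_nf
    rw [sum_range_succ, ih, ← htel, ← sum_add_distrib]
    refine sum_congr rfl fun i _ => ?_
    push_cast
    ring_nf

/-- The Alt summation formula: `∑_{k=0}^{n−1} f(k) = A_m − R_m`. -/
theorem alt_summation_formula (n m : ℕ) (hm : 1 ≤ m) (f F : ℝ → ℝ)
    (hf : ContDiff ℝ (2 * m) f) (hF : ∀ x : ℝ, HasDerivAt F (f x) x) :
    ∑ k ∈ Finset.range n, f k =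
      (∑ j ∈ Finset.Icc 1 m, altGamma m j *
          ∑ i ∈ Finset.range j,
            (F ((n : ℝ) - 1 + (j : ℝ) / 2 - (i : ℝ)) - F ((i : ℝ) - (j : ℝ) / 2)))
        - altR m n f := by
  have hshift (k : ℕ) : ContDiff ℝ (2 * m : ℕ) fun y => f (k + y) :=
    (by exact_mod_cast hf : ContDiff ℝ (2 * m : ℕ) f).comp (by fun_prop)
  have hderiv (y : ℝ) :
      HasDerivAt (fun y => ∑ k ∈ range n, F (k + y)) (∑ k ∈ range n, f (k + y)) y :=
    HasDerivAt.fun_sum fun k _ => HasDerivAt.comp_const_add (k : ℝ) y (hF _)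
  have hiter (y : ℝ) : iteratedDeriv (2 * m) (fun y => ∑ k ∈ range n, f (k + y)) y =
      ∑ k ∈ range n, iteratedDeriv (2 * m) f (k + y) := by
    rw [iteratedDeriv_fun_sum fun k _ => (hshift k).contDiffAt]
    simp [iteratedDeriv_comp_const_add]
  have h := alt_formula_at hm (ContDiff.sum fun k _ => hshift k) hderiv 0
  simp only [hiter, add_zero, zero_add, zero_sub, ← sub_eq_add_neg, ← sum_sub_distrib] at h
  rw [altR, h]
  simp_rw [sum_range_sub_eq_sum_range_sub]
end

section
/- For every integer m ≥ 1, the coefficients sum to one in both forms: ∑_{j=1}^{m} γ_{m,j} · j = 1 and ∑_{α=1−m}^{m−1} τ_{m,1+|α|} = 1. -/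
/-- The coefficients `τ_{m,r} := ∑_{β=0}^{⌊(m−r)/2⌋} γ_{m,r+2β}`. -/
noncomputable def altTau (m r : ℕ) : ℝ :=
  ∑ β ∈ Finset.range ((m - r) / 2 + 1), altGamma m (r + 2 * β)

open Finset

theorem sum_Icc_neg_one_pow_mul_choose_succ {R : Type*} [CommRing R] (n j k : ℕ) :
    ∑ i ∈ Icc 1 k, (-1 : R) ^ (i - 1) * ((n + 1).choose (j + i) : R) =
      (n.choose j : R) - (-1) ^ k * (n.choose (j + k) : R) := by
  induction k with
  | zero => simp
  | succ k ih =>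
    rw [sum_Icc_succ_top (by omega), ih, add_tsub_cancel_right, ← add_assoc,
      Nat.choose_succ_succ', Nat.cast_add, pow_succ]
    ring

theorem Nat.choose_two_mul_succ_succ (n : ℕ) :
    (2 * (n + 1)).choose (n + 1) = 2 * (2 * n + 1).choose (n + 1) := by
  rw [show 2 * (n + 1) = 2 * n + 1 + 1 by ring, Nat.choose_succ_succ', Nat.choose_symm_half]
  ring

theorem altGamma_mul_self (m : ℕ) {j : ℕ} (hj : j ≠ 0) :
    altGamma m j * j = 2 * ((-1) ^ (j - 1) * ((2 * m).choose (m + j) : ℝ)) / (2 * m).choose m := by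
  have : (j : ℝ) ≠ 0 := Nat.cast_ne_zero.mpr hj
  rw [altGamma]
  field_simp

theorem sum_altGamma_mul_self {m : ℕ} (hm : 1 ≤ m) :
    ∑ j ∈ Icc 1 m, altGamma m j * j = 1 := by
  obtain ⟨n, rfl⟩ : ∃ n, m = n + 1 := ⟨m - 1, by omega⟩
  have hsum : ∑ j ∈ Icc 1 (n + 1), (-1 : ℝ) ^ (j - 1) * ((2 * (n + 1)).choose (n + 1 + j) : ℝ) =
      (2 * n + 1).choose (n + 1) := by
    rw [show 2 * (n + 1) = 2 * n + 1 + 1 by ring, sum_Icc_neg_one_pow_mul_choose_succ,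
      Nat.choose_eq_zero_of_lt (by omega : 2 * n + 1 < n + 1 + (n + 1))]
    simp
  rw [sum_congr rfl fun j hj => altGamma_mul_self (n + 1) (by simp at hj; omega), ← sum_div,
    ← mul_sum, hsum, Nat.choose_two_mul_succ_succ, Nat.cast_mul, Nat.cast_two]
  exact div_self (mul_ne_zero two_ne_zero (Nat.cast_ne_zero.mpr (Nat.choose_pos (by omega)).ne'))

theorem sum_Icc_natAbs_sum_range_eq_sum_nsmul {M : Type*} [AddCommMonoid M] (m : ℕ) (f : ℕ → M) :
    ∑ α ∈ Icc (1 - (m : ℤ)) (m - 1), ∑ β ∈ range ((m - (1 + α.natAbs)) / 2 + 1),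
        f (1 + α.natAbs + 2 * β) = ∑ j ∈ Icc 1 m, j • f j := by
  rw [show ∑ j ∈ Icc 1 m, j • f j = ∑ j ∈ Icc 1 m, ∑ _k ∈ range j, f j by simp,
    sum_sigma', sum_sigma']
  -- `(α, β) ↦ (j, k)` with `j = 1 + |α| + 2β` and `α = j - 1 - 2k`
  refine sum_bij' (fun x _ => ⟨1 + x.1.natAbs + 2 * x.2, x.2 + (-x.1).toNat⟩)
    (fun y _ => ⟨(y.1 : ℤ) - 1 - 2 * y.2, min y.2 (y.1 - 1 - y.2)⟩) ?_ ?_ ?_ ?_ ?_ <;>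
    rintro ⟨a, b⟩ h <;>
    simp only [mem_sigma, mem_Icc, mem_range, Sigma.mk.injEq, heq_eq_eq] at h ⊢ <;> omega

/-- The coefficients of the integrals in the Alt approximation sum to `1`, in both forms:
`∑_{j=1}^m γ_{m,j}·j = 1` and `∑_{α=1−m}^{m−1} τ_{m,1+|α|} = 1`. -/
theorem alt_coeffs_sum_to_one (m : ℕ) (hm : 1 ≤ m) :
    (∑ j ∈ Finset.Icc 1 m, altGamma m j * (j : ℝ)) = 1 ∧
    (∑ α ∈ Finset.Icc (1 - (m : ℤ)) ((m : ℤ) - 1), altTau m (1 + α.natAbs)) = 1 := by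
  refine ⟨sum_altGamma_mul_self hm, ?_⟩
  simp_rw [altTau, sum_Icc_natAbs_sum_range_eq_sum_nsmul, nsmul_eq_mul, mul_comm _ (altGamma m _)]
  exact sum_altGamma_mul_self hm
end

section
/- For every integer m ≥ 1 and every odd integer q with 1 ≤ q ≤ 2m−1, one has ∑_{j=1}^{m} γ_{m,j} · j^q = 1 if q = 1 and ∑_{j=1}^{m} γ_{m,j} · j^q = 0 if q ∈ {3, 5, …, 2m−1}. -/
open Finset

theorem sum_range_neg_one_pow_mul_choose_mul_sub_pow {R : Type*} [CommRing R] {n s : ℕ}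
    (h : s < n) (c : R) :
    ∑ k ∈ range (n + 1), (-1) ^ k * (n.choose k : R) * ((k : R) - c) ^ s = 0 := by
  have hΔ := congr_fun (fwdDiff_iter_pow_eq_zero_of_lt (R := R) h) (-c)
  rw [fwdDiff_iter_eq_sum_shift, Pi.zero_apply] at hΔ
  rw [← mul_zero ((-1 : R) ^ n), ← hΔ, mul_sum]
  refine sum_congr rfl fun k hk ↦ ?_
  have hsign : (-1 : R) ^ n * (-1) ^ (n - k) = (-1) ^ k := by
    rw [← pow_add, show n + (n - k) = k + 2 * (n - k) by simp at hk; omega, pow_add, pow_mul,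
      neg_one_sq, one_pow, mul_one]
  rw [zsmul_eq_mul, nsmul_one, ← mul_assoc]
  push_cast
  rw [← mul_assoc, hsign, neg_add_eq_sub]

theorem sum_range_two_mul_add_one_of_symm {M : Type*} [AddCommMonoid M] (g : ℕ → M) (m : ℕ)
    (hg : ∀ j ≤ m, g (m - j) = g (m + j)) :
    ∑ k ∈ range (2 * m + 1), g k = g m + 2 • ∑ j ∈ Icc 1 m, g (m + j) := by
  have hupper : ∑ j ∈ Icc 1 m, g (m + j) = ∑ k ∈ range m, g (m + (k + 1)) := by
    rw [← Ico_add_one_right_eq_Icc, sum_Ico_eq_sum_range, Nat.add_sub_cancel]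
    simp only [add_comm 1]
  have hlower : ∑ k ∈ range m, g k = ∑ k ∈ range m, g (m + (k + 1)) := by
    rw [← sum_range_reflect]
    refine sum_congr rfl fun k hk ↦ ?_
    rw [show m - 1 - k = m - (k + 1) by omega, hg (k + 1) (by simp at hk; omega)]
  rw [show 2 * m + 1 = m + (m + 1) by ring, sum_range_add, sum_range_succ', hlower, hupper,
    two_nsmul]
  abel

theorem two_mul_sum_neg_one_pow_mul_choose_mul_pow {R : Type*} [CommRing R] {m s : ℕ}
    (hs : Even s) (hsm : s < 2 * m) :
    2 * ∑ j ∈ Icc 1 m, (-1) ^ j * ((2 * m).choose (m + j) : R) * (j : R) ^ s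
      = -(0 ^ s * ((2 * m).choose m : R)) := by
  set g : ℕ → R := fun k ↦ (-1) ^ m * ((-1) ^ k * ((2 * m).choose k : R) * ((k : R) - m) ^ s)
  have hsign : ∀ i, (-1 : R) ^ m * (-1) ^ (m + i) = (-1) ^ i := fun i ↦ by
    rw [← pow_add, ← add_assoc, ← two_mul, pow_add, pow_mul, neg_one_sq, one_pow, one_mul]
  have hsymm : ∀ j ≤ m, g (m - j) = g (m + j) := fun j hj ↦ by
    have hpow : (-1 : R) ^ (m - j) = (-1) ^ (m + j) := by
      rw [show m + j = m - j + 2 * j by omega, pow_add, pow_mul, neg_one_sq, one_pow, mul_one]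
    have hchoose : (2 * m).choose (m - j) = (2 * m).choose (m + j) :=
      Nat.choose_symm_of_eq_add (by omega)
    simp only [g, hpow, hchoose, Nat.cast_sub hj, Nat.cast_add, sub_sub_cancel_left,
      add_sub_cancel_left, hs.neg_pow]
  have hzero : ∑ k ∈ range (2 * m + 1), g k = 0 := by
    rw [← mul_sum, sum_range_neg_one_pow_mul_choose_mul_sub_pow hsm, mul_zero]
  rw [sum_range_two_mul_add_one_of_symm g m hsymm] at hzero
  simp only [g, Nat.cast_add, add_sub_cancel_left, sub_self, ← mul_assoc, hsign] at hzero
  rw [← mul_pow, neg_one_mul, neg_neg, one_pow, one_mul, nsmul_eq_mul, Nat.cast_ofNat] at hzero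
  linear_combination hzero

theorem alt_gamma_odd_moments_general (m q : ℕ) (hq : Odd q) (hq2 : q ≤ 2 * m - 1) :
    ∑ j ∈ Finset.Icc 1 m, altGamma m j * (j : ℝ) ^ q = if q = 1 then 1 else 0 := by
  obtain ⟨k, rfl⟩ := hq
  have hC : ((2 * m).choose m : ℝ) ≠ 0 := by exact_mod_cast (Nat.choose_pos (by omega)).ne'
  have hterm : ∀ j ∈ Icc 1 m, altGamma m j * (j : ℝ) ^ (2 * k + 1)
      = 2 * ((-1) ^ j * ((2 * m).choose (m + j) : ℝ) * (j : ℝ) ^ (2 * k))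
        * -((2 * m).choose m : ℝ)⁻¹ := fun j hj ↦ by
    obtain ⟨i, rfl⟩ : ∃ i, j = i + 1 := ⟨j - 1, by simp at hj; omega⟩
    simp only [altGamma, Nat.add_sub_cancel, pow_succ, Nat.cast_add_one]
    field_simp
  rw [sum_congr rfl hterm, ← sum_mul, ← mul_sum,
    two_mul_sum_neg_one_pow_mul_choose_mul_pow (even_two_mul k) (by omega), neg_mul_neg,
    mul_inv_cancel_right₀ hC]
  rcases k with _ | k <;> simp

/-- For every odd `q` with `1 ≤ q ≤ 2m−1`, one has
`∑_{j=1}^m γ_{m,j}·j^q = 1` if `q = 1` and `= 0` if `q ∈ {3,5,…,2m−1}`. -/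
theorem alt_gamma_odd_moments (m q : ℕ) (hm : 1 ≤ m) (hq : Odd q)
    (hq1 : 1 ≤ q) (hq2 : q ≤ 2 * m - 1) :
    ∑ j ∈ Finset.Icc 1 m, altGamma m j * (j : ℝ) ^ q = if q = 1 then 1 else 0 :=
  alt_gamma_odd_moments_general m q hq hq2
end

section
/- Let n be a nonnegative integer, m ≥ 1 an integer, and f : ℝ → ℝ a 2m-times continuously differentiable function. If M ≥ 0 is a real number such that |∑_{k=0}^{n−1} f^{(2m)}(k+w)| ≤ M for all w ∈ [−m/2, m/2], then |R_m| ≤ (M/((2m+1)!·2^{2m})) · ∑_{j=1}^{m} |γ_{m,j}| · j^{2m+1}. -/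
open Finset Set

lemma abs_sum_mul_le_mul_sum_abs {ι : Type*} (t : Finset ι) (c g : ι → ℝ) {M : ℝ}
    (hg : ∀ i ∈ t, |g i| ≤ M) : |∑ i ∈ t, c i * g i| ≤ M * ∑ i ∈ t, |c i| := by
  rw [Finset.mul_sum]
  refine (abs_sum_le_sum_abs _ _).trans (sum_le_sum fun i hi => ?_)
  rw [abs_mul, mul_comm M]
  exact mul_le_mul_of_nonneg_left (hg i hi) (abs_nonneg _)

lemma mul_mul_div_two_mem_Icc {j m : ℕ} (hjm : j ≤ m) {s v : ℝ} (hs : s ∈ Icc (0 : ℝ) 1)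
    (hv : v ∈ Icc (-1 : ℝ) 1) : (j : ℝ) * s * v / 2 ∈ Icc (-(m : ℝ) / 2) ((m : ℝ) / 2) := by
  have hjs : |(j : ℝ) * s| ≤ m := by
    rw [abs_mul, Nat.abs_cast, abs_of_nonneg hs.1]
    exact mul_le_of_le_one_right (Nat.cast_nonneg j) hs.2 |>.trans (mod_cast hjm)
  have hjsv : |(j : ℝ) * s * v| ≤ m := by
    rw [abs_mul]
    exact mul_le_of_le_one_right (abs_nonneg _) (abs_le.2 hv) |>.trans hjs
  obtain ⟨hlo, hhi⟩ := abs_le.1 hjsv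
  constructor <;> linarith

lemma abs_sum_altGamma_le {D : ℝ → ℝ} {n m : ℕ} {M : ℝ}
    (hbound : ∀ w ∈ Icc (-(m : ℝ) / 2) ((m : ℝ) / 2), |∑ k ∈ range n, D ((k : ℝ) + w)| ≤ M)
    {s v : ℝ} (hs : s ∈ Icc (0 : ℝ) 1) (hv : v ∈ Icc (-1 : ℝ) 1) :
    |∑ j ∈ Finset.Icc 1 m, altGamma m j * (j : ℝ) ^ (2 * m + 1) *
        ∑ k ∈ range n, D ((k : ℝ) + (j : ℝ) * s * v / 2)| ≤
      M * ∑ j ∈ Finset.Icc 1 m, |altGamma m j| * (j : ℝ) ^ (2 * m + 1) := by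
  have hsum := abs_sum_mul_le_mul_sum_abs (Finset.Icc 1 m)
    (fun j => altGamma m j * (j : ℝ) ^ (2 * m + 1))
    (fun j => ∑ k ∈ range n, D ((k : ℝ) + (j : ℝ) * s * v / 2))
    (fun j hj => hbound _ (mul_mul_div_two_mem_Icc (Finset.mem_Icc.1 hj).2 hs hv))
  simpa only [abs_mul, abs_pow, Nat.abs_cast] using hsum

lemma abs_intervalIntegral_mul_le {w F : ℝ → ℝ} {a b C : ℝ} (hab : a ≤ b)
    (hw : ∀ x ∈ Icc a b, 0 ≤ w x) (hF : ∀ x ∈ Icc a b, |F x| ≤ C)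
    (hwi : IntervalIntegrable w MeasureTheory.volume a b) :
    |∫ x in a..b, w x * F x| ≤ (∫ x in a..b, w x) * C := by
  rw [← intervalIntegral.integral_mul_const, ← Real.norm_eq_abs]
  refine intervalIntegral.norm_integral_le_of_norm_le hab
    (MeasureTheory.ae_of_all _ fun x hx => ?_) (hwi.mul_const C)
  have hx' := Ioc_subset_Icc_self hx
  rw [Real.norm_eq_abs, abs_mul, abs_of_nonneg (hw x hx')]
  exact mul_le_mul_of_nonneg_left (hF x hx') (hw x hx')

lemma integral_neg_one_one_pow_two_mul (m : ℕ) :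
    ∫ v in (-1 : ℝ)..1, v ^ (2 * m) = 2 / (2 * m + 1) := by
  rw [integral_pow, one_pow, Odd.neg_one_pow ⟨m, rfl⟩]
  push_cast
  ring

lemma integral_zero_one_one_sub_pow (k : ℕ) :
    ∫ s in (0 : ℝ)..1, (1 - s) ^ k = 1 / (k + 1) := by
  rw [intervalIntegral.integral_comp_sub_left (fun x => x ^ k), sub_self, sub_zero,
    integral_pow, one_pow, zero_pow k.succ_ne_zero, sub_zero]

lemma factorial_two_mul_add_one_mul_two_pow {m : ℕ} (hm : 1 ≤ m) :
    1 / (((2 * m - 1).factorial : ℝ) * 2 ^ (2 * m + 1)) * (1 / (2 * m) * (2 / (2 * m + 1))) =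
      1 / (((2 * m + 1).factorial : ℝ) * 2 ^ (2 * m)) := by
  obtain ⟨k, rfl⟩ : ∃ k, m = k + 1 := ⟨m - 1, by omega⟩
  rw [show 2 * (k + 1) - 1 = 2 * k + 1 by omega, show 2 * (k + 1) + 1 = 2 * k + 2 + 1 by omega,
    Nat.factorial_succ (2 * k + 2), Nat.factorial_succ (2 * k + 1)]
  push_cast
  field_simp
  ring

theorem alt_remainder_bound_general (n m : ℕ) (hm : 1 ≤ m) (f : ℝ → ℝ) (M : ℝ)
    (hbound : ∀ w ∈ Set.Icc (-(m : ℝ) / 2) ((m : ℝ) / 2),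
      |∑ k ∈ Finset.range n, iteratedDeriv (2 * m) f ((k : ℝ) + w)| ≤ M) :
    |altR m n f| ≤ M / (((2 * m + 1).factorial : ℝ) * 2 ^ (2 * m)) *
      ∑ j ∈ Finset.Icc 1 m, |altGamma m j| * (j : ℝ) ^ (2 * m + 1) := by
  set S := ∑ j ∈ Finset.Icc 1 m, |altGamma m j| * (j : ℝ) ^ (2 * m + 1)
  have hinner : ∀ s ∈ Icc (0 : ℝ) 1, |∫ v in (-1 : ℝ)..1, v ^ (2 * m) *
      ∑ j ∈ Finset.Icc 1 m, altGamma m j * (j : ℝ) ^ (2 * m + 1) *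
        ∑ k ∈ range n, iteratedDeriv (2 * m) f ((k : ℝ) + (j : ℝ) * s * v / 2)| ≤
      2 / (2 * m + 1) * (M * S) := fun s hs => by
    simpa only [integral_neg_one_one_pow_two_mul] using
      abs_intervalIntegral_mul_le (by norm_num) (fun v _ => (even_two_mul m).pow_nonneg v)
        (fun v hv => abs_sum_altGamma_le hbound hs hv)
        (Continuous.intervalIntegrable (by fun_prop) _ _)
  have houter := abs_intervalIntegral_mul_le (by norm_num)
    (fun s hs => pow_nonneg (sub_nonneg.2 hs.2) (2 * m - 1)) hinner
    (Continuous.intervalIntegrable (by fun_prop) _ _)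
  rw [integral_zero_one_one_sub_pow, show ((2 * m - 1 : ℕ) : ℝ) + 1 = 2 * m by
    rw [Nat.cast_sub (by omega)]; push_cast; ring] at houter
  rw [altR, abs_mul, abs_of_pos (by positivity)]
  calc _ ≤ 1 / (((2 * m - 1).factorial : ℝ) * 2 ^ (2 * m + 1)) *
        (1 / (2 * m) * (2 / (2 * m + 1) * (M * S))) := by gcongr
    _ = _ := by rw [div_eq_mul_one_div M, ← factorial_two_mul_add_one_mul_two_pow hm]; ring

/-- Bound on the Alt remainder: if `|∑_{k=0}^{n−1} f^{(2m)}(k+w)| ≤ M` for all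
`w ∈ [−m/2, m/2]`, then `|R_m| ≤ (M/((2m+1)!·2^{2m})) · ∑_{j=1}^m |γ_{m,j}|·j^{2m+1}`. -/
theorem alt_remainder_bound (n m : ℕ) (hm : 1 ≤ m) (f : ℝ → ℝ)
    (hf : ContDiff ℝ (2 * m) f) (M : ℝ) (hM : 0 ≤ M)
    (hbound : ∀ w ∈ Set.Icc (-(m : ℝ) / 2) ((m : ℝ) / 2),
      |∑ k ∈ Finset.range n, iteratedDeriv (2 * m) f ((k : ℝ) + w)| ≤ M) :
    |altR m n f| ≤ M / (((2 * m + 1).factorial : ℝ) * 2 ^ (2 * m)) *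
      ∑ j ∈ Finset.Icc 1 m, |altGamma m j| * (j : ℝ) ^ (2 * m + 1) :=
  alt_remainder_bound_general n m hm f M hbound
end

section
/- Let m ≥ 1 be an integer and p an integer with 0 ≤ p ≤ 2m−1. Then the p-th Bernoulli number satisfies B_p = ∑_{j=1}^{m} γ_{m,j} ∑_{i=0}^{j−1} (j/2 − i − 1)^p = (1/2^p) · (τ_{m,1}·(−1)^p + ∑_{β=2}^{m} τ_{m,β} · ((β−2)^p + (−β)^p)), with the convention 0^0 := 1. -/
open Finset

namespace Polynomial

variable {A : Type*} [CommRing A] [Algebra ℚ A]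

theorem aeval_bernoulli (n : ℕ) (x : A) :
    aeval x (bernoulli n) =
      ∑ i ∈ range (n + 1), algebraMap ℚ A (_root_.bernoulli (n - i) * n.choose i) * x ^ i := by
  simp [bernoulli_def, aeval_monomial]

theorem aeval_bernoulli_one_add (n : ℕ) (x : A) :
    aeval (1 + x) (bernoulli n) = aeval x (bernoulli n) + n * x ^ (n - 1) := by
  simpa [aeval_comp] using congr_arg (aeval x) (bernoulli_comp_one_add_X n)

theorem aeval_bernoulli_succ_sub_aeval_sub_natCast (n j : ℕ) (y : A) :
    aeval y (bernoulli (n + 1)) - aeval (y - j) (bernoulli (n + 1)) =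
      (n + 1) * ∑ i ∈ range j, (y - i - 1) ^ n := by
  induction j with
  | zero => simp
  | succ j ih =>
    have hstep := aeval_bernoulli_one_add (n + 1) (y - j - 1)
    rw [show 1 + (y - j - 1) = y - j by ring] at hstep
    rw [sum_range_succ, mul_add, ← ih, Nat.cast_succ, ← sub_sub, hstep, Nat.add_sub_cancel]
    push_cast
    ring

end Polynomial

theorem sum_range_two_mul_add_one {M : Type*} [AddCommMonoid M] (m : ℕ) (T : ℕ → M) :
    ∑ k ∈ range (2 * m + 1), T k = T m + ∑ j ∈ Icc 1 m, (T (m + j) + T (m - j)) := by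
  induction m generalizing T with
  | zero => simp
  | succ m ih =>
    rw [show 2 * (m + 1) + 1 = 2 * m + 1 + 1 + 1 by ring, sum_range_succ, sum_range_succ', ih,
      sum_Icc_succ_top (by omega), Nat.sub_self, ← two_mul]
    have hshift : ∀ j ∈ Icc 1 m, T (m + j + 1) + T (m - j + 1) = T (m + 1 + j) + T (m + 1 - j) :=
      fun j hj => by rw [Nat.sub_add_comm (mem_Icc.1 hj).2, Nat.add_right_comm]
    rw [sum_congr rfl hshift, show 2 * (m + 1) = 2 * m + 2 by ring]
    abel

theorem alternating_sum_choose_mul_add_pow_eq_zero {R : Type*} [CommRing R] {e n : ℕ}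
    (h : e < n) (y : R) :
    ∑ k ∈ range (n + 1), (-1) ^ (n - k) * n.choose k * (y + k) ^ e = 0 := by
  have hdiff := congr_fun (fwdDiff_iter_pow_eq_zero_of_lt (R := R) h) y
  rw [fwdDiff_iter_eq_sum_shift] at hdiff
  simpa [zsmul_eq_mul] using hdiff

theorem alternating_sum_choose_central_mul_pow_eq_zero {R : Type*} [CommRing R] {e m : ℕ}
    (he : e < 2 * m) :
    (2 * m).choose m * (0 : R) ^ e +
      ∑ j ∈ Icc 1 m, (-1) ^ j * (2 * m).choose (m + j) * ((j : R) ^ e + (-(j : R)) ^ e) = 0 := by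
  have hsign : ∀ j ≤ m, (-1 : R) ^ (m - j) = (-1) ^ m * (-1) ^ j := fun j hj => by
    conv_rhs => rw [← Nat.sub_add_cancel hj]
    rw [pow_add, mul_assoc, ← pow_add, ← two_mul, pow_mul]
    simp
  have hpair : ∀ j ∈ Icc 1 m,
      (-1 : R) ^ (2 * m - (m + j)) * ((2 * m).choose (m + j)) * (-(m : R) + ↑(m + j)) ^ e +
        (-1) ^ (2 * m - (m - j)) * ((2 * m).choose (m - j)) * (-(m : R) + ↑(m - j)) ^ e =
      (-1) ^ m * ((-1) ^ j * (2 * m).choose (m + j) * ((j : R) ^ e + (-(j : R)) ^ e)) := by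
    intro j hj
    have hjm := (mem_Icc.1 hj).2
    rw [show 2 * m - (m + j) = m - j by omega, show 2 * m - (m - j) = m + j by omega,
      Nat.choose_symm_of_eq_add (show 2 * m = m - j + (m + j) by omega), Nat.cast_sub hjm,
      hsign j hjm, pow_add]
    push_cast
    ring
  have h := alternating_sum_choose_mul_add_pow_eq_zero (R := R) he (-(m : R))
  rw [sum_range_two_mul_add_one, sum_congr rfl hpair, ← mul_sum, show 2 * m - m = m by omega,
    neg_add_cancel, mul_assoc, ← mul_add] at h
  exact ((isUnit_neg_one (α := R)).pow m).mul_right_eq_zero.1 h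

theorem sum_altGamma_mul_pow_sub_neg_pow {m n : ℕ} (hn : n ≤ 2 * m) :
    ∑ j ∈ Icc 1 m, altGamma m j * (((j : ℝ) / 2) ^ n - (-((j : ℝ) / 2)) ^ n) =
      if n = 1 then 1 else 0 := by
  cases n with
  | zero => simp
  | succ e =>
    have hC : ((2 * m).choose m : ℝ) ≠ 0 := by
      exact_mod_cast (Nat.choose_pos (by omega : m ≤ 2 * m)).ne'
    have hterm : ∀ j ∈ Icc 1 m,
        altGamma m j * (((j : ℝ) / 2) ^ (e + 1) - (-((j : ℝ) / 2)) ^ (e + 1)) =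
          -(1 / (2 ^ e * (2 * m).choose m)) *
            ((-1) ^ j * (2 * m).choose (m + j) * ((j : ℝ) ^ e + (-(j : ℝ)) ^ e)) := by
      intro j hj
      obtain ⟨i, rfl⟩ := Nat.exists_eq_add_of_le' (mem_Icc.1 hj).1
      rw [altGamma, Nat.add_sub_cancel, ← neg_div, div_pow, div_pow]
      field_simp
      ring
    rw [sum_congr rfl hterm, ← mul_sum, eq_neg_of_add_eq_zero_right
      (alternating_sum_choose_central_mul_pow_eq_zero (R := ℝ) (m := m) (e := e) (by omega))]
    rcases e with _ | e
    · simp [hC]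
    · simp

theorem bernoulli_eq_sum_altGamma_mul_sum_pow {m p : ℕ} (hp : p + 1 ≤ 2 * m) :
    (bernoulli p : ℝ) =
      ∑ j ∈ Icc 1 m, altGamma m j * ∑ i ∈ range j, ((j : ℝ) / 2 - i - 1) ^ p := by
  set c : ℕ → ℝ := fun k => algebraMap ℚ ℝ (bernoulli (p + 1 - k) * (p + 1).choose k)
  have htel : ∀ j : ℕ, (p + 1 : ℝ) * ∑ i ∈ range j, ((j : ℝ) / 2 - i - 1) ^ p =
      ∑ k ∈ range (p + 2), c k * (((j : ℝ) / 2) ^ k - (-((j : ℝ) / 2)) ^ k) := by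
    intro j
    rw [← Polynomial.aeval_bernoulli_succ_sub_aeval_sub_natCast,
      show (j : ℝ) / 2 - j = -(j / 2) by ring, Polynomial.aeval_bernoulli,
      Polynomial.aeval_bernoulli, ← sum_sub_distrib]
    simp only [mul_sub]
    rfl
  refine mul_left_cancel₀ (by positivity : (p + 1 : ℝ) ≠ 0) ?_
  calc (p + 1 : ℝ) * bernoulli p = ∑ k ∈ range (p + 2), c k * if k = 1 then 1 else 0 := by
        simp [c, mul_comm]
    _ = ∑ k ∈ range (p + 2), c k *
          ∑ j ∈ Icc 1 m, altGamma m j * (((j : ℝ) / 2) ^ k - (-((j : ℝ) / 2)) ^ k) :=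
        sum_congr rfl fun k hk => by
          rw [sum_altGamma_mul_pow_sub_neg_pow (by have := mem_range.1 hk; omega)]
    _ = ∑ j ∈ Icc 1 m,
          altGamma m j * ((p + 1 : ℝ) * ∑ i ∈ range j, ((j : ℝ) / 2 - i - 1) ^ p) := by
        simp only [htel, mul_sum]
        rw [sum_comm]
        exact sum_congr rfl fun j _ => sum_congr rfl fun k _ => by ring
    _ = _ := by
        rw [mul_sum]
        exact sum_congr rfl fun j _ => by ring

-- The values `j - 2i - 2` for `i < j` are `j - 2, j - 4, …, -j`; they pair up as `{β - 2, -β}`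
-- for `β = j, j - 2, …`, except that `β = 1` contributes `-1` only once.
noncomputable def foldedPow (p β : ℕ) : ℝ :=
  (-(β : ℝ)) ^ p + if 2 ≤ β then ((β : ℝ) - 2) ^ p else 0

theorem sum_range_sub_two_mul_pow_eq_sum_foldedPow (p j : ℕ) :
    ∑ i ∈ range j, ((j : ℝ) - 2 * i - 2) ^ p =
      ∑ δ ∈ range ((j + 1) / 2), foldedPow p (j - 2 * δ) := by
  induction j using Nat.twoStepInduction with
  | zero => simp
  | one => norm_num [foldedPow]
  | more j ih _ =>
    have hpeel : ∑ i ∈ range (j + 2), ((↑(j + 2) : ℝ) - 2 * i - 2) ^ p =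
        ∑ i ∈ range j, ((j : ℝ) - 2 * i - 2) ^ p + foldedPow p (j + 2) := by
      rw [sum_range_succ', sum_range_succ, foldedPow, if_pos (by omega)]
      push_cast
      ring_nf
    rw [hpeel, ih, show (j + 2 + 1) / 2 = (j + 1) / 2 + 1 by omega, sum_range_succ']
    congr 1
    exact sum_congr rfl fun δ _ => by rw [show j + 2 - 2 * (δ + 1) = j - 2 * δ by omega]

theorem sum_Icc_sum_range_sub_two_mul_comm {M : Type*} [AddCommMonoid M] (m : ℕ)
    (F : ℕ → ℕ → M) :
    ∑ j ∈ Icc 1 m, ∑ δ ∈ range ((j + 1) / 2), F j (j - 2 * δ) =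
      ∑ β ∈ Icc 1 m, ∑ δ ∈ range ((m - β) / 2 + 1), F (β + 2 * δ) β := by
  rw [sum_sigma', sum_sigma']
  refine sum_nbij' (fun x => ⟨x.1 - 2 * x.2, x.2⟩) (fun x => ⟨x.1 + 2 * x.2, x.2⟩)
    ?_ ?_ ?_ ?_ ?_
  all_goals
    rintro ⟨a, δ⟩ h
    simp only [mem_sigma, mem_Icc, mem_range, Sigma.mk.inj_iff, heq_eq_eq, and_true] at h ⊢
  · omega
  · omega
  · omega
  · omega
  · rw [Nat.sub_add_cancel (by omega)]

theorem sum_altGamma_mul_sum_pow_eq_altTau {m : ℕ} (hm : 1 ≤ m) (p : ℕ) :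
    ∑ j ∈ Icc 1 m, altGamma m j * ∑ i ∈ range j, ((j : ℝ) / 2 - i - 1) ^ p =
      1 / 2 ^ p * (altTau m 1 * (-1 : ℝ) ^ p +
        ∑ β ∈ Icc 2 m, altTau m β * (((β : ℝ) - 2) ^ p + (-(β : ℝ)) ^ p)) := by
  have hhalve : ∀ j : ℕ, ∑ i ∈ range j, ((j : ℝ) / 2 - i - 1) ^ p =
      1 / 2 ^ p * ∑ i ∈ range j, ((j : ℝ) - 2 * i - 2) ^ p := fun j => by
    rw [mul_sum]
    exact sum_congr rfl fun i _ => by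
      rw [show (j : ℝ) / 2 - i - 1 = ((j : ℝ) - 2 * i - 2) / 2 by ring, div_pow]
      ring
  calc _ = 1 / 2 ^ p * ∑ j ∈ Icc 1 m, ∑ δ ∈ range ((j + 1) / 2),
          altGamma m j * foldedPow p (j - 2 * δ) := by
        simp only [hhalve, sum_range_sub_two_mul_pow_eq_sum_foldedPow, mul_sum]
        exact sum_congr rfl fun j _ => sum_congr rfl fun δ _ => by ring
    _ = 1 / 2 ^ p * ∑ β ∈ Icc 1 m, altTau m β * foldedPow p β := by
        rw [sum_Icc_sum_range_sub_two_mul_comm m fun j β => altGamma m j * foldedPow p β]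
        simp only [altTau, sum_mul]
    _ = _ := by
        rw [← insert_Icc_add_one_left_eq_Icc hm, sum_insert (by simp)]
        congr 2
        · norm_num [foldedPow]
        · exact sum_congr rfl fun β hβ => by
            rw [foldedPow, if_pos (mem_Icc.1 hβ).1]
            ring

/-- The Bernoulli numbers (with `B₁ = −1/2`) expressed through the Alt coefficients:
for `0 ≤ p ≤ 2m−1`,
`B_p = ∑_{j=1}^m γ_{m,j} ∑_{i=0}^{j−1} (j/2−i−1)^p
     = 2^{−p}·(τ_{m,1}(−1)^p + ∑_{β=2}^m τ_{m,β}((β−2)^p + (−β)^p))`. -/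
theorem bernoulli_eq_alt_coeffs (m p : ℕ) (hm : 1 ≤ m) (hp : p ≤ 2 * m - 1) :
    ((bernoulli p : ℚ) : ℝ) =
      (∑ j ∈ Finset.Icc 1 m, altGamma m j *
        ∑ i ∈ Finset.range j, ((j : ℝ) / 2 - (i : ℝ) - 1) ^ p) ∧
    ((bernoulli p : ℚ) : ℝ) =
      1 / 2 ^ p * (altTau m 1 * (-1 : ℝ) ^ p +
        ∑ β ∈ Finset.Icc 2 m, altTau m β * (((β : ℝ) - 2) ^ p + (-(β : ℝ)) ^ p)) := by
  have hfirst := bernoulli_eq_sum_altGamma_mul_sum_pow (m := m) (p := p) (by omega)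
  exact ⟨hfirst, hfirst.trans (sum_altGamma_mul_sum_pow_eq_altTau hm p)⟩
end

section
/- Let m ≥ 1 be an integer, a a real number with a ≥ (m+3)/2, θ₀ ∈ (0, π/2], and f : ℂ → ℂ continuous on the sector S, holomorphic in the interior of S, and satisfying |f(z)| ≤ μ·|z+a+1|^λ for all z ∈ S, where μ ≥ 0 and λ ≥ 0 are real. Then for every nonnegative integer α and every real x ≥ −m/2 − 1/2, the α-th derivative of f at x satisfies |f^{(α)}(x)| ≤ μ · α! · (2 + sin θ₀)^λ · (sin θ₀)^{−α} · (x+a)^{λ−α}. -/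
open Real

/-- The closed sector of the complex plane with vertex `−a` and half-angle `θ₀`:
`S := { −a + r·e^{iθ} : r ≥ 0, |θ| ≤ θ₀ }`. -/
def altSector (a θ₀ : ℝ) : Set ℂ :=
  {z : ℂ | ∃ r θ : ℝ, 0 ≤ r ∧ |θ| ≤ θ₀ ∧ z = -(a : ℂ) + r * Complex.exp (θ * Complex.I)}

/-! Cauchy's estimate on the largest disc centred at `x` inside the sector, of radius
`(x + a) sin θ₀`, bounds `f^{(α)}(x)` by `α! · M / ((x + a) sin θ₀)^α`, where `M` bounds `f` on
that disc. Every point of the disc lies within `(x + a + 1) + (x + a) sin θ₀ ≤ (x + a)(2 + sin θ₀)`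
of `−a − 1` (using `x + a ≥ 1`), so the growth hypothesis gives `M = μ ((x + a)(2 + sin θ₀))^λ`. -/

lemma neg_add_mem_altSector {a θ₀ : ℝ} (hθ₀ : 0 ≤ θ₀) (hθ₀π : θ₀ ≤ π) {w : ℂ}
    (hw : ‖w‖ * cos θ₀ ≤ w.re) : -(a : ℂ) + w ∈ altSector a θ₀ := by
  rcases eq_or_ne w 0 with rfl | hw0
  · exact ⟨0, 0, le_rfl, by simpa using hθ₀, by simp⟩
  refine ⟨‖w‖, w.arg, norm_nonneg w, ?_, by rw [Complex.norm_mul_exp_arg_mul_I w]⟩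
  by_contra! hlt
  have hcos_le : cos θ₀ ≤ cos w.arg := by
    rw [Complex.cos_arg hw0, le_div_iff₀ (norm_pos_iff.mpr hw0)]
    linarith
  have hcos_lt : cos |w.arg| < cos θ₀ :=
    strictAntiOn_cos ⟨hθ₀, hθ₀π⟩ ⟨abs_nonneg _, Complex.abs_arg_le_pi w⟩ hlt
  rw [cos_abs] at hcos_lt
  linarith

lemma norm_mul_cos_le_re_of_norm_sub_le {d θ : ℝ} (hd : 0 ≤ d) (hθ : 0 ≤ cos θ) {w : ℂ}
    (hw : ‖w - d‖ ≤ d * sin θ) : ‖w‖ * cos θ ≤ w.re := by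
  set s := sin θ
  set c := cos θ
  set t := (w - d).re
  set i := (w - d).im
  have hsc : s ^ 2 + c ^ 2 = 1 := sin_sq_add_cos_sq θ
  have hre : w.re = d + t := by simp [t]
  have hnorm_sq : ‖w‖ ^ 2 = (d + t) ^ 2 + i ^ 2 := by
    rw [Complex.sq_norm, Complex.normSq_apply, hre]
    simp only [Complex.sub_im, Complex.ofReal_im, sub_zero, i]
    ring
  have hti : t ^ 2 + i ^ 2 ≤ (d * s) ^ 2 := by
    have : ‖w - d‖ ^ 2 = t ^ 2 + i ^ 2 := by
      rw [Complex.sq_norm, Complex.normSq_apply]; ring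
    nlinarith [norm_nonneg (w - d)]
  have ht : |t| ≤ d * s := (Complex.abs_re_le_norm _).trans hw
  have hre_nonneg : 0 ≤ w.re := by
    rw [hre]; nlinarith [abs_le.mp ht, sin_le_one θ]
  -- using `c² = 1 - s²` and `i² ≤ (d s)² - t²`, the slack is exactly `(d s² + t)²`
  have hsq : (‖w‖ * c) ^ 2 ≤ w.re ^ 2 := by
    rw [mul_pow, hnorm_sq, hre]
    nlinarith [sq_nonneg (s ^ 2 * d + t), mul_le_mul_of_nonneg_left hti (sq_nonneg c)]
  exact (pow_le_pow_iff_left₀ (mul_nonneg (norm_nonneg w) hθ) hre_nonneg two_ne_zero).1 hsq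

lemma closedBall_subset_altSector {a θ₀ x : ℝ} (hθ₀ : θ₀ ∈ Set.Icc 0 (π / 2))
    (hxa : 0 ≤ x + a) :
    Metric.closedBall (x : ℂ) ((x + a) * sin θ₀) ⊆ altSector a θ₀ := by
  intro z hz
  have hcos : 0 ≤ cos θ₀ := cos_nonneg_of_mem_Icc ⟨by linarith [hθ₀.1, pi_pos], hθ₀.2⟩
  rw [show z = -(a : ℂ) + (z + a) by ring]
  refine neg_add_mem_altSector hθ₀.1 (hθ₀.2.trans (by linarith [pi_pos])) ?_
  refine norm_mul_cos_le_re_of_norm_sub_le hxa hcos ?_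
  rw [Complex.ofReal_add, show z + a - (x + a : ℂ) = z - x by ring, ← dist_eq_norm]
  exact hz

lemma norm_add_add_one_le_of_mem_closedBall {a x r : ℝ} (hxa : -1 ≤ x + a) {z : ℂ}
    (hz : z ∈ Metric.closedBall (x : ℂ) r) : ‖z + a + 1‖ ≤ x + a + 1 + r := by
  have hcentre : ‖((x + a + 1 : ℝ) : ℂ)‖ = x + a + 1 := by
    rw [Complex.norm_real, norm_eq_abs, abs_of_nonneg (by linarith)]
  calc ‖z + a + 1‖ = ‖((x + a + 1 : ℝ) : ℂ) + (z - x)‖ := by push_cast; ring_nf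
    _ ≤ x + a + 1 + r := norm_add_le_of_le hcentre.le (by rwa [← dist_eq_norm])

theorem sector_derivative_bound_general (m : ℕ) (a θ₀ μ lam : ℝ)
    (ha : ((m : ℝ) + 3) / 2 ≤ a) (hθ : θ₀ ∈ Set.Ioc 0 (π / 2))
    (f : ℂ → ℂ)
    (hcont : ContinuousOn f (altSector a θ₀))
    (hholo : DifferentiableOn ℂ f (interior (altSector a θ₀)))
    (hμ : 0 ≤ μ) (hlam : 0 ≤ lam)
    (hbound : ∀ z ∈ altSector a θ₀,
      ‖f z‖ ≤ μ * ‖z + (a : ℂ) + 1‖ ^ lam) :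
    ∀ (α : ℕ) (x : ℝ), -(m : ℝ) / 2 - 1 / 2 ≤ x →
      ‖iteratedDeriv α f (x : ℂ)‖ ≤
        μ * (α.factorial : ℝ) * (2 + Real.sin θ₀) ^ lam * Real.sin θ₀ ^ (-(α : ℝ)) *
          (x + a) ^ (lam - (α : ℝ)) := by
  intro α x hx
  have hd : 1 ≤ x + a := by linarith
  have hs : 0 < sin θ₀ := sin_pos_of_pos_of_lt_pi hθ.1 (hθ.2.trans_lt (by linarith [pi_pos]))
  have hR : 0 < (x + a) * sin θ₀ := by positivity
  have hdisc : Metric.closedBall (x : ℂ) ((x + a) * sin θ₀) ⊆ altSector a θ₀ :=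
    closedBall_subset_altSector (Set.Ioc_subset_Icc_self hθ) (by linarith)
  have hdiffcont : DiffContOnCl ℂ f (Metric.ball (x : ℂ) ((x + a) * sin θ₀)) :=
    ⟨hholo.mono (interior_maximal (Metric.ball_subset_closedBall.trans hdisc) Metric.isOpen_ball),
      by rw [closure_ball _ hR.ne']; exact hcont.mono hdisc⟩
  have hsphere : ∀ z ∈ Metric.sphere (x : ℂ) ((x + a) * sin θ₀),
      ‖f z‖ ≤ μ * ((x + a) * (2 + sin θ₀)) ^ lam := by
    intro z hz
    have hz' := Metric.sphere_subset_closedBall hz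
    refine (hbound z (hdisc hz')).trans (mul_le_mul_of_nonneg_left ?_ hμ)
    refine rpow_le_rpow (norm_nonneg _) ?_ hlam
    have := norm_add_add_one_le_of_mem_closedBall (a := a) (by linarith) hz'
    nlinarith
  calc ‖iteratedDeriv α f (x : ℂ)‖
      ≤ α.factorial * (μ * ((x + a) * (2 + sin θ₀)) ^ lam) / ((x + a) * sin θ₀) ^ α :=
        Complex.norm_iteratedDeriv_le_of_forall_mem_sphere_norm_le α hR hdiffcont hsphere
    _ = _ := by
      rw [mul_rpow (by linarith) (by linarith), rpow_sub (by linarith), rpow_neg hs.le,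
        rpow_natCast, rpow_natCast, mul_pow]
      field_simp

/-- Cauchy-type bound on the derivatives: if `f` is continuous on the sector `S`,
holomorphic in its interior, and `|f(z)| ≤ μ·|z+a+1|^λ` on `S`, then for every `α ∈ ℕ`
and real `x ≥ −m/2 − 1/2`,
`|f^{(α)}(x)| ≤ μ·α!·(2+sin θ₀)^λ·(sin θ₀)^{−α}·(x+a)^{λ−α}`. -/
theorem sector_derivative_bound (m : ℕ) (hm : 1 ≤ m) (a θ₀ μ lam : ℝ)
    (ha : ((m : ℝ) + 3) / 2 ≤ a) (hθ : θ₀ ∈ Set.Ioc 0 (π / 2))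
    (f : ℂ → ℂ)
    (hcont : ContinuousOn f (altSector a θ₀))
    (hholo : DifferentiableOn ℂ f (interior (altSector a θ₀)))
    (hμ : 0 ≤ μ) (hlam : 0 ≤ lam)
    (hbound : ∀ z ∈ altSector a θ₀,
      ‖f z‖ ≤ μ * ‖z + (a : ℂ) + 1‖ ^ lam) :
    ∀ (α : ℕ) (x : ℝ), -(m : ℝ) / 2 - 1 / 2 ≤ x →
      ‖iteratedDeriv α f (x : ℂ)‖ ≤
        μ * (α.factorial : ℝ) * (2 + Real.sin θ₀) ^ lam * Real.sin θ₀ ^ (-(α : ℝ)) *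
          (x + a) ^ (lam - (α : ℝ)) :=
  sector_derivative_bound_general m a θ₀ μ lam ha hθ f hcont hholo hμ hlam hbound
end

section
/- For every integer m ≥ 2, one has ∑_{j=1}^{m} |γ_{m,j}| · j^{2m+1} ≤ 1.001·π·Λ*^m·m^{2m+1}. For m = 1, the same inequality holds with the constant 1.0331 in place of 1.001. -/
open Real

/-- `Λ(t) := (1−t)^{t−1}·(1+t)^{−1−t}·t²`. -/
noncomputable def altLambda (t : ℝ) : ℝ :=
  (1 - t) ^ (t - 1) * (1 + t) ^ (-1 - t) * t ^ 2

/-- `Λ* := max_{0<t<1} Λ(t) = 0.3081…`. -/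
noncomputable def altLambdaStar : ℝ := sSup (altLambda '' Set.Ioo 0 1)

/-!
For `t = j/m` one has `Λ(t)^m = j^{2m} / ((m-j)^{m-j} (m+j)^{m+j})`, so the `j`-th term is
`2 m^{2m} Λ(j/m)^m` times `C(2m, m+j) (m+j)^{m+j} (m-j)^{m-j} / (C(2m, m) m^{2m})`.
Since `(1 + 1/n)^{2n+1}` decreases, `C(a+b, a) a^a b^b √(ab)` only grows when `(a, b)` moves
towards the diagonal with `a + b` fixed; hence for `j < m` the `j`-th term is at most
`2 m^{2m} Λ*^m / √(1 - (j/m)^2)`. By convexity of `arcsin` these bounds are dominated by a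
telescoping sum, giving `2 m^{2m} Λ*^m (mπ/2 - 1)` in total, while the term `j = m`, which is
`2 m^{2m} / C(2m, m)`, is at most `2 m^{2m} Λ*^m` once `m ≥ 8`. This proves the bound
`π Λ*^m m^{2m+1}` for `m ≥ 8`; the cases `m ≤ 7` are numerical, using `Λ* ≥ Λ(5/6)`.
-/

theorem antitoneOn_two_mul_add_one_mul_log_one_add_inv :
    AntitoneOn (fun x : ℝ => (2 * x + 1) * log (1 + x⁻¹)) (Set.Ioi 0) := by
  intro y (hy : 0 < y) x (hx : 0 < x) hyx
  have hsum (z : ℝ) (hz : 0 < z) :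
      HasSum (fun k : ℕ => (2 : ℝ) / (2 * k + 1) * ((2 * z + 1) ^ 2)⁻¹ ^ k)
        ((2 * z + 1) * log (1 + z⁻¹)) := by
    refine ((hasSum_log_one_add_inv hz).mul_left (2 * z + 1)).congr_fun fun k => ?_
    rw [pow_succ _ (2 * k), pow_mul]
    simp only [one_div, inv_pow]
    field_simp
  refine hasSum_le (fun k => ?_) (hsum x hx) (hsum y hy)
  gcongr

theorem add_one_pow_mul_pow_le {a b : ℕ} (h : b ≤ a) :
    (a + 1) ^ (2 * a + 1) * b ^ (2 * b + 1) ≤ (b + 1) ^ (2 * b + 1) * a ^ (2 * a + 1) := by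
  rcases Nat.eq_zero_or_pos b with rfl | hb
  · simp
  have hb' : (0 : ℝ) < b := by exact_mod_cast hb
  have ha' : (0 : ℝ) < a := by exact_mod_cast hb.trans_le h
  have hlog (n : ℕ) (hn : (0 : ℝ) < n) : (2 * (n : ℝ) + 1) * log (1 + (n : ℝ)⁻¹) =
      log (((n + 1) / n) ^ (2 * n + 1)) := by
    rw [Real.log_pow, show 1 + (n : ℝ)⁻¹ = (n + 1) / n by field_simp]
    push_cast; ring
  have key := antitoneOn_two_mul_add_one_mul_log_one_add_inv hb' ha' (by exact_mod_cast h)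
  simp only [hlog a ha', hlog b hb'] at key
  rw [Real.log_le_log_iff (by positivity) (by positivity), div_pow, div_pow,
    div_le_div_iff₀ (by positivity) (by positivity)] at key
  exact_mod_cast key

-- The square of `C(a+b, a) a^a b^b √(ab)`, kept in `ℕ` to avoid the square root.
def binomWeight (a b : ℕ) : ℕ := (a + b).choose a ^ 2 * a ^ (2 * a + 1) * b ^ (2 * b + 1)

theorem binomWeight_succ_left_le {a b : ℕ} (h : b ≤ a) :
    binomWeight (a + 1) b ≤ binomWeight a (b + 1) := by
  have hc : (a + 1 + b).choose (a + 1) * (a + 1) = (a + (b + 1)).choose a * (b + 1) := by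
    rw [show a + 1 + b = a + b + 1 by ring, show a + (b + 1) = a + b + 1 by ring,
      Nat.choose_succ_right_eq, show a + b + 1 - a = b + 1 by omega]
  unfold binomWeight
  calc _ = ((a + 1 + b).choose (a + 1) * (a + 1)) ^ 2 *
        ((a + 1) ^ (2 * a + 1) * b ^ (2 * b + 1)) := by ring
    _ ≤ ((a + (b + 1)).choose a * (b + 1)) ^ 2 * ((b + 1) ^ (2 * b + 1) * a ^ (2 * a + 1)) := by
        rw [hc]; exact Nat.mul_le_mul_left _ (add_one_pow_mul_pow_le h)
    _ = _ := by ring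

theorem binomWeight_add_sub_le_binomWeight_self {m j : ℕ} (h : j ≤ m) :
    binomWeight (m + j) (m - j) ≤ binomWeight m m := by
  induction j with
  | zero => simp
  | succ j ih =>
    calc binomWeight (m + (j + 1)) (m - (j + 1))
        ≤ binomWeight (m + j) (m - (j + 1) + 1) :=
          binomWeight_succ_left_le (a := m + j) (by omega)
      _ = binomWeight (m + j) (m - j) := by rw [show m - (j + 1) + 1 = m - j by omega]
      _ ≤ binomWeight m m := ih (by omega)

theorem choose_mul_pow_mul_sqrt_le {m j : ℕ} (h : j ≤ m) :
    ((2 * m).choose (m + j) : ℝ) * ((m : ℝ) + j) ^ (m + j) * ((m : ℝ) - j) ^ (m - j) *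
        √(((m : ℝ) + j) * ((m : ℝ) - j)) ≤
      ((2 * m).choose m : ℝ) * (m : ℝ) ^ (2 * m + 1) := by
  have hj : (j : ℝ) ≤ m := by exact_mod_cast h
  have hw : (binomWeight (m + j) (m - j) : ℝ) ≤ binomWeight m m := by
    exact_mod_cast binomWeight_add_sub_le_binomWeight_self h
  rw [binomWeight, binomWeight, show m + j + (m - j) = 2 * m by omega, ← two_mul] at hw
  push_cast [Nat.cast_sub h] at hw
  rw [← pow_le_pow_iff_left₀ (by positivity) (by positivity) two_ne_zero]
  calc _ = ((2 * m).choose (m + j) : ℝ) ^ 2 * ((m : ℝ) + j) ^ (2 * (m + j) + 1) *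
        ((m : ℝ) - j) ^ (2 * (m - j) + 1) := by
        rw [mul_pow, Real.sq_sqrt (mul_nonneg (by positivity) (by linarith))]
        ring
    _ ≤ _ := hw
    _ = _ := by ring

theorem altLambda_nonneg {t : ℝ} (h0 : -1 ≤ t) (h1 : t ≤ 1) : 0 ≤ altLambda t := by
  unfold altLambda
  have : 0 ≤ 1 - t := by linarith
  have : 0 ≤ 1 + t := by linarith
  positivity

theorem altLambda_le_exp_one {t : ℝ} (h0 : 0 ≤ t) (h1 : t < 1) : altLambda t ≤ exp 1 := by
  have hx : 0 < 1 - t := by linarith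
  have h_first : (1 - t) ^ (t - 1) ≤ exp 1 := by
    rw [Real.rpow_def_of_pos hx, exp_le_exp]
    nlinarith [Real.self_sub_one_le_mul_log hx.le]
  have h_second : (1 + t) ^ (-1 - t) ≤ 1 :=
    Real.rpow_le_one_of_one_le_of_nonpos (by linarith) (by linarith)
  have h_third : t ^ 2 ≤ 1 := by nlinarith
  calc altLambda t ≤ exp 1 * 1 * 1 := by unfold altLambda; gcongr
    _ = exp 1 := by ring

theorem bddAbove_altLambda_image : BddAbove (altLambda '' Set.Ioo 0 1) :=
  ⟨exp 1, Set.forall_mem_image.2 fun _ ht => altLambda_le_exp_one ht.1.le ht.2⟩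

theorem altLambda_le_altLambdaStar {t : ℝ} (h0 : 0 < t) (h1 : t < 1) :
    altLambda t ≤ altLambdaStar :=
  le_csSup bddAbove_altLambda_image ⟨t, ⟨h0, h1⟩, rfl⟩

-- `Λ(5/6) = 0.308120…`; the case `m = 1` of the theorem needs nearly all of these digits.
theorem le_altLambdaStar : (0.3081115 : ℝ) ≤ altLambdaStar := by
  have h_pow : altLambda (5 / 6) ^ 6 = 6 * (6 / 11) ^ 11 * (25 / 36) ^ 6 := by
    rw [altLambda, mul_pow, mul_pow, ← Real.rpow_natCast _ 6, ← Real.rpow_natCast _ 6,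
      ← Real.rpow_mul (by norm_num), ← Real.rpow_mul (by norm_num)]
    norm_num
  have h_five_sixths : (0.3081115 : ℝ) ≤ altLambda (5 / 6) := by
    refine le_of_pow_le_pow_left₀ (n := 6) (by norm_num)
      (altLambda_nonneg (by norm_num) (by norm_num)) ?_
    rw [h_pow]; norm_num
  exact h_five_sixths.trans (altLambda_le_altLambdaStar (by norm_num) (by norm_num))

theorem altLambdaStar_pos : 0 < altLambdaStar := le_altLambdaStar.trans_lt' (by norm_num)

theorem altLambda_div_pow_mul {m j : ℕ} (hj : j < m) :
    altLambda (j / m) ^ m * (((m : ℝ) - j) ^ (m - j) * ((m : ℝ) + j) ^ (m + j)) =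
      (j : ℝ) ^ (2 * m) := by
  have hm : (0 : ℝ) < m := by exact_mod_cast (Nat.zero_le j).trans_lt hj
  have hjm : (j : ℝ) < m := by exact_mod_cast hj
  have hsub : ((m - j : ℕ) : ℝ) = m - j := Nat.cast_sub hj.le
  have h_minus : 1 - (j : ℝ) / m = (m - j) / m := by field_simp
  have h_plus : 1 + (j : ℝ) / m = (m + j) / m := by field_simp
  have e1 : ((1 - (j : ℝ) / m) ^ ((j : ℝ) / m - 1)) ^ m =
      (((m - j : ℝ) / m) ^ (m - j))⁻¹ := by
    rw [← Real.rpow_natCast _ m, ← Real.rpow_mul (by rw [h_minus]; positivity), h_minus,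
      show ((j : ℝ) / m - 1) * m = -((m - j : ℕ) : ℝ) by rw [hsub]; field_simp; ring,
      Real.rpow_neg (by positivity), Real.rpow_natCast]
  have e2 : ((1 + (j : ℝ) / m) ^ (-1 - (j : ℝ) / m)) ^ m =
      (((m + j : ℝ) / m) ^ (m + j))⁻¹ := by
    rw [← Real.rpow_natCast _ m, ← Real.rpow_mul (by rw [h_plus]; positivity), h_plus,
      show (-1 - (j : ℝ) / m) * m = -((m + j : ℕ) : ℝ) by push_cast; field_simp; ring,
      Real.rpow_neg (by positivity), Real.rpow_natCast]
  have hpow : (m : ℝ) ^ (m - j) * (m : ℝ) ^ (m + j) = (m : ℝ) ^ (2 * m) := by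
    rw [← pow_add]; congr 1; omega
  have hmj : (0 : ℝ) < m - j := by linarith
  rw [altLambda, mul_pow, mul_pow, e1, e2, ← pow_mul, div_pow, div_pow, div_pow]
  field_simp
  rw [hpow]
  ring

theorem convexOn_arcsin_Icc : ConvexOn ℝ (Set.Icc 0 1) arcsin := by
  refine MonotoneOn.convexOn_of_deriv (convex_Icc 0 1) continuous_arcsin.continuousOn ?_ ?_
  · rw [interior_Icc]
    exact fun x hx =>
      (differentiableAt_arcsin.2 ⟨by linarith [hx.1], hx.2.ne⟩).differentiableWithinAt
  · rw [interior_Icc, deriv_arcsin]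
    intro x hx y hy hxy
    have : 0 < 1 - y ^ 2 := by nlinarith [hy.1, hy.2]
    have : 0 ≤ x := hx.1.le
    dsimp only
    gcongr

theorem sum_range_inv_sqrt_one_sub_sq_le (m : ℕ) :
    ∑ j ∈ Finset.range m, 1 / √(1 - ((j : ℝ) / m) ^ 2) ≤ m * (π / 2) := by
  have hstep (j : ℕ) (hj : j ∈ Finset.range m) : 1 / √(1 - ((j : ℝ) / m) ^ 2) ≤
      m * (arcsin ((j + 1 : ℕ) / m) - arcsin (j / m)) := by
    have hjm : j + 1 ≤ m := Finset.mem_range.1 hj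
    have hm : (0 : ℝ) < m := by exact_mod_cast (Nat.succ_pos j).trans_le hjm
    have hjm' : ((j + 1 : ℕ) : ℝ) ≤ m := by exact_mod_cast hjm
    have hx0 : (0 : ℝ) ≤ j / m := by positivity
    have hy1 : ((j + 1 : ℕ) : ℝ) / m ≤ 1 := by rwa [div_le_one hm]
    have hxy : (j : ℝ) / m < (j + 1 : ℕ) / m := by gcongr; simp
    have hslope := convexOn_arcsin_Icc.le_slope_of_hasDerivAt ⟨hx0, hxy.le.trans hy1⟩
      ⟨hx0.trans hxy.le, hy1⟩ hxy (hasDerivAt_arcsin (by linarith) (hxy.trans_le hy1).ne)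
    rw [slope_def_field] at hslope
    convert hslope using 1
    push_cast
    field_simp
    ring
  calc _ ≤ ∑ j ∈ Finset.range m, m * (arcsin ((j + 1 : ℕ) / m) - arcsin (j / m)) :=
        Finset.sum_le_sum hstep
    _ = m * (arcsin (m / m) - arcsin 0) := by
        rw [← Finset.mul_sum, Finset.sum_range_sub (fun j : ℕ => arcsin (j / m))]
        simp
    _ ≤ m * (π / 2) := by
        rw [arcsin_zero, sub_zero]
        gcongr
        exact arcsin_le_pi_div_two _

theorem one_le_pow_mul_centralBinom {m : ℕ} (hm : 8 ≤ m) :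
    1 ≤ (0.3081115 : ℝ) ^ m * m.centralBinom := by
  induction m, hm using Nat.le_induction with
  | base => norm_num [Nat.centralBinom, Nat.choose]
  | succ m hm ih =>
    have hrec : ((m + 1 : ℕ) : ℝ) * (m + 1).centralBinom = 2 * (2 * m + 1) * m.centralBinom :=
      mod_cast Nat.succ_mul_centralBinom_succ m
    have hm' : (8 : ℝ) ≤ m := by exact_mod_cast hm
    push_cast at hrec
    rw [← mul_le_mul_iff_of_pos_left (by positivity : (0 : ℝ) < m + 1)]
    calc ((m : ℝ) + 1) * 1 ≤ ((m : ℝ) + 1) * ((0.3081115 : ℝ) ^ m * m.centralBinom) := by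
          gcongr
      _ ≤ 0.3081115 * (2 * (2 * m + 1)) * ((0.3081115 : ℝ) ^ m * m.centralBinom) := by
          gcongr; linarith
      _ = _ := by rw [pow_succ]; linear_combination (0.3081115 : ℝ) ^ m * 0.3081115 * hrec.symm

theorem abs_altGamma_mul_pow {m j : ℕ} (hj : j ≠ 0) :
    |altGamma m j| * (j : ℝ) ^ (2 * m + 1) =
      2 * ((2 * m).choose (m + j) : ℝ) * (j : ℝ) ^ (2 * m) / ((2 * m).choose m : ℝ) := by
  have : (0 : ℝ) < j := by positivity
  simp only [altGamma, abs_div, abs_mul, abs_pow, abs_neg, abs_one, one_pow, one_mul,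
    Nat.abs_cast, abs_of_pos (by positivity : (0 : ℝ) < 2 / j)]
  field_simp
  ring

theorem sum_abs_altGamma_mul_pow (m : ℕ) :
    ∑ j ∈ Finset.Icc 1 m, |altGamma m j| * (j : ℝ) ^ (2 * m + 1) =
      2 * ((∑ j ∈ Finset.Icc 1 m, (2 * m).choose (m + j) * j ^ (2 * m) : ℕ) : ℝ) /
        ((2 * m).choose m : ℝ) := by
  push_cast
  rw [Finset.mul_sum, Finset.sum_div]
  refine Finset.sum_congr rfl fun j hj => ?_
  rw [abs_altGamma_mul_pow (by simp at hj; omega)]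
  ring

theorem le_mul_pi_mul_altLambdaStar_pow_mul_pow_of_le {x c : ℝ} {m : ℕ} (hc : 0 ≤ c)
    (h : x ≤ c * 3.141592 * 0.3081115 ^ m * (m : ℝ) ^ (2 * m + 1)) :
    x ≤ c * π * altLambdaStar ^ m * (m : ℝ) ^ (2 * m + 1) := by
  refine h.trans ?_
  gcongr
  exacts [pi_gt_d6.le, le_altLambdaStar]

theorem abs_altGamma_mul_pow_le {m j : ℕ} (hj0 : j ≠ 0) (hjm : j < m) :
    |altGamma m j| * (j : ℝ) ^ (2 * m + 1) ≤
      2 * (m : ℝ) ^ (2 * m) * altLambdaStar ^ m / √(1 - ((j : ℝ) / m) ^ 2) := by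
  have hm : (0 : ℝ) < m := by exact_mod_cast (Nat.zero_le j).trans_lt hjm
  have hj : (j : ℝ) < m := by exact_mod_cast hjm
  have hprod : 0 < ((m : ℝ) + j) * ((m : ℝ) - j) := by nlinarith
  have hs : 0 < √(((m : ℝ) + j) * ((m : ℝ) - j)) := Real.sqrt_pos.2 hprod
  have hsqrt : √(1 - ((j : ℝ) / m) ^ 2) = √(((m : ℝ) + j) * ((m : ℝ) - j)) / m := by
    rw [← Real.sqrt_sq hm.le, ← Real.sqrt_div' _ (sq_nonneg _), Real.sqrt_sq hm.le]
    congr 1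
    field_simp
    ring
  have hc : (0 : ℝ) < (2 * m).choose m := by exact_mod_cast Nat.choose_pos (by omega)
  have ht0 : (0 : ℝ) < j / m := by positivity
  have ht1 : (j : ℝ) / m < 1 := by rwa [div_lt_one hm]
  have hΛ : altLambda (j / m) ^ m ≤ altLambdaStar ^ m :=
    pow_le_pow_left₀ (altLambda_nonneg (by linarith) ht1.le)
      (altLambda_le_altLambdaStar ht0 ht1) m
  have hbinom := choose_mul_pow_mul_sqrt_le hjm.le
  rw [abs_altGamma_mul_pow hj0, hsqrt, ← altLambda_div_pow_mul hjm]
  set s := √(((m : ℝ) + j) * ((m : ℝ) - j))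
  calc _ = 2 * altLambda (j / m) ^ m *
          (((2 * m).choose (m + j) : ℝ) * ((m : ℝ) + j) ^ (m + j) *
            ((m : ℝ) - j) ^ (m - j) * s) /
          (((2 * m).choose m : ℝ) * s) := by
        field_simp
    _ ≤ 2 * altLambdaStar ^ m * (((2 * m).choose m : ℝ) * (m : ℝ) ^ (2 * m + 1)) /
          (((2 * m).choose m : ℝ) * s) := by
        have : (0 : ℝ) ≤ (m : ℝ) - j := by linarith
        have := altLambdaStar_pos
        gcongr
    _ = _ := by
        field_simp
        ring

theorem abs_altGamma_self_mul_pow_le {m : ℕ} (hm : 8 ≤ m) :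
    |altGamma m m| * (m : ℝ) ^ (2 * m + 1) ≤ 2 * (m : ℝ) ^ (2 * m) * altLambdaStar ^ m := by
  have hc : (0 : ℝ) < (2 * m).choose m := by exact_mod_cast Nat.choose_pos (by omega)
  have hr : 1 ≤ (0.3081115 : ℝ) ^ m * (2 * m).choose m := by
    rw [← Nat.centralBinom_eq_two_mul_choose]
    exact one_le_pow_mul_centralBinom hm
  rw [abs_altGamma_mul_pow (by omega), show m + m = 2 * m by ring, Nat.choose_self, Nat.cast_one,
    mul_one, div_le_iff₀ hc]
  calc 2 * (m : ℝ) ^ (2 * m)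
        ≤ 2 * (m : ℝ) ^ (2 * m) * ((0.3081115 : ℝ) ^ m * (2 * m).choose m) :=
          le_mul_of_one_le_right (by positivity) hr
    _ ≤ 2 * (m : ℝ) ^ (2 * m) * (altLambdaStar ^ m * (2 * m).choose m) := by
        gcongr
        exact le_altLambdaStar
    _ = _ := by ring

theorem sum_abs_altGamma_mul_pow_le {m : ℕ} (hm : 8 ≤ m) :
    ∑ j ∈ Finset.Icc 1 m, |altGamma m j| * (j : ℝ) ^ (2 * m + 1) ≤
      π * altLambdaStar ^ m * (m : ℝ) ^ (2 * m + 1) := by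
  set c := 2 * (m : ℝ) ^ (2 * m) * altLambdaStar ^ m
  have h_inner : ∑ j ∈ Finset.Ico 1 m, |altGamma m j| * (j : ℝ) ^ (2 * m + 1) ≤
      c * (m * (π / 2) - 1) := by
    calc _ ≤ ∑ j ∈ Finset.Ico 1 m, c * (1 / √(1 - ((j : ℝ) / m) ^ 2)) := by
          refine Finset.sum_le_sum fun j hj => ?_
          rw [Finset.mem_Ico] at hj
          rw [mul_one_div]
          exact abs_altGamma_mul_pow_le (by omega) hj.2
      _ = c * (∑ j ∈ Finset.range m, 1 / √(1 - ((j : ℝ) / m) ^ 2) - 1) := by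
          rw [Finset.sum_range_eq_add_Ico _ (by omega), ← Finset.mul_sum]
          simp
      _ ≤ c * (m * (π / 2) - 1) := by
          have : 0 ≤ c := by have := altLambdaStar_pos; positivity
          gcongr
          exact sum_range_inv_sqrt_one_sub_sq_le m
  rw [← Finset.Ico_insert_right (by omega), Finset.sum_insert (by simp)]
  calc _ ≤ c + c * (m * (π / 2) - 1) := add_le_add (abs_altGamma_self_mul_pow_le hm) h_inner
    _ = _ := by ring

/-- `∑_{j=1}^m |γ_{m,j}|·j^{2m+1} ≤ 1.001·π·Λ*^m·m^{2m+1}` for `m ≥ 2`;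
for `m = 1` the same holds with constant `1.0331`. -/
theorem alt_gamma_abs_sum_bound :
    (∀ m : ℕ, 2 ≤ m →
      ∑ j ∈ Finset.Icc 1 m, |altGamma m j| * (j : ℝ) ^ (2 * m + 1) ≤
        1.001 * π * altLambdaStar ^ m * (m : ℝ) ^ (2 * m + 1)) ∧
    (∑ j ∈ Finset.Icc 1 1, |altGamma 1 j| * (j : ℝ) ^ (2 * 1 + 1) ≤
      1.0331 * π * altLambdaStar ^ 1 * (1 : ℝ) ^ (2 * 1 + 1)) := by
  refine ⟨fun m hm => ?_, ?_⟩
  · rcases le_or_gt 8 m with h8 | h8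
    · refine (sum_abs_altGamma_mul_pow_le h8).trans ?_
      have : 0 ≤ π * altLambdaStar ^ m * (m : ℝ) ^ (2 * m + 1) := by
        have := altLambdaStar_pos; positivity
      linarith
    · refine le_mul_pi_mul_altLambdaStar_pow_mul_pow_of_le (by norm_num) ?_
      rw [sum_abs_altGamma_mul_pow]
      interval_cases m <;> norm_num [Finset.sum_Icc_succ_top, Nat.choose]
  · rw [← Nat.cast_one (R := ℝ)]
    refine le_mul_pi_mul_altLambdaStar_pow_mul_pow_of_le (by norm_num) ?_
    rw [sum_abs_altGamma_mul_pow]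
    norm_num
end

section
/- For every integer m ≥ 1, the central binomial coefficient satisfies C(2m, m) > 2^{2m}·e^{−1/(8m)}/√(π·m). -/
/-!
Let `r m` be the ratio of `C(2m, m)²` to `16 ^ m * exp (-1 / (4m)) / (π m)`, the square of the
bound. Since `(2m + 1)² = 4m(m + 1) + 1`, the recursion
`(m + 1) C(2m + 2, m + 1) = 2(2m + 1) C(2m, m)` gives `r (m + 1) = r m * (1 + x) * exp (-x)`
with `x = 1 / (4m(m + 1))`, so `r` is strictly decreasing because `1 + x < exp x`.
By Wallis' product `r m → 1`, hence `r m > 1`.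
-/

open Real Filter Topology

lemma one_add_mul_exp_neg_lt_one {x : ℝ} (hx : x ≠ 0) : (1 + x) * exp (-x) < 1 := by
  calc (1 + x) * exp (-x) < exp x * exp (-x) := by
        gcongr
        linarith [add_one_lt_exp hx]
    _ = 1 := by rw [← exp_add, add_neg_cancel, exp_zero]

namespace Nat

lemma centralBinom_sq_mul_W (n : ℕ) :
    (centralBinom n : ℝ) ^ 2 * (2 * n + 1) * Wallis.W n = 16 ^ n := by
  have hfac : ((2 * n)! : ℝ) = centralBinom n * n ! ^ 2 := by
    rw [centralBinom, two_mul, ← add_choose_mul_factorial_mul_factorial n n]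
    push_cast
    ring
  have : (centralBinom n : ℝ) ≠ 0 := mod_cast centralBinom_ne_zero n
  rw [Wallis.W_eq_factorial_ratio, hfac, pow_mul]
  field_simp
  norm_num

lemma tendsto_centralBinom_sq_mul_div_sixteen_pow :
    Tendsto (fun n : ℕ ↦ (centralBinom n : ℝ) ^ 2 * (π * n) / 16 ^ n) atTop (𝓝 1) := by
  have hlim := (Stirling.tendsto_self_div_two_mul_self_add_one.const_mul π).div
    Wallis.tendsto_W_nhds_pi_div_two (by positivity)
  rw [show π * (1 / 2) / (π / 2) = 1 by field_simp] at hlim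
  refine hlim.congr fun n ↦ ?_
  have hW := centralBinom_sq_mul_W n
  have := Wallis.W_pos n
  have : (centralBinom n : ℝ) ≠ 0 := mod_cast centralBinom_ne_zero n
  rw [Pi.div_apply, ← hW]
  field_simp

noncomputable def centralBinomSqRatio (m : ℕ) : ℝ :=
  (centralBinom m : ℝ) ^ 2 * (π * m) * exp (1 / (4 * m)) / 16 ^ m

lemma centralBinomSqRatio_pos {m : ℕ} (hm : 0 < m) : 0 < centralBinomSqRatio m := by
  unfold centralBinomSqRatio
  have := centralBinom_pos m
  positivity

lemma centralBinomSqRatio_succ {m : ℕ} (hm : 0 < m) :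
    centralBinomSqRatio (m + 1) =
      centralBinomSqRatio m * ((1 + 1 / (4 * m * (m + 1))) * exp (-(1 / (4 * m * (m + 1))))) := by
  have hm' : (0 : ℝ) < m := mod_cast hm
  have hrec : (centralBinom (m + 1) : ℝ) = 2 * (2 * m + 1) * centralBinom m / (m + 1) := by
    rw [eq_div_iff (by positivity), mul_comm]
    exact_mod_cast succ_mul_centralBinom_succ m
  have hexp : exp (1 / (4 * ↑(m + 1))) = exp (1 / (4 * m)) * exp (-(1 / (4 * m * (m + 1)))) := by
    rw [← exp_add]
    congr 1
    push_cast
    field_simp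
    ring
  unfold centralBinomSqRatio
  rw [hexp, hrec]
  push_cast
  field_simp
  ring

lemma centralBinomSqRatio_succ_lt {m : ℕ} (hm : 0 < m) :
    centralBinomSqRatio (m + 1) < centralBinomSqRatio m := by
  rw [centralBinomSqRatio_succ hm]
  exact mul_lt_of_lt_one_right (centralBinomSqRatio_pos hm)
    (one_add_mul_exp_neg_lt_one (by positivity))

lemma tendsto_centralBinomSqRatio : Tendsto centralBinomSqRatio atTop (𝓝 1) := by
  have hexp : Tendsto (fun m : ℕ ↦ exp (1 / (4 * m))) atTop (𝓝 1) := by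
    simpa [div_eq_mul_inv, mul_comm] using
      (tendsto_const_div_atTop_nhds_zero_nat (1 / 4 : ℝ)).rexp
  simpa using (tendsto_centralBinom_sq_mul_div_sixteen_pow.mul hexp).congr fun m ↦ by
    simp only [centralBinomSqRatio]; ring

lemma one_lt_centralBinomSqRatio {m : ℕ} (hm : 0 < m) : 1 < centralBinomSqRatio m := by
  have hanti : Antitone fun n ↦ centralBinomSqRatio (n + 1) :=
    antitone_nat_of_succ_le fun n ↦ (centralBinomSqRatio_succ_lt n.succ_pos).le
  have := hanti.le_of_tendsto (tendsto_centralBinomSqRatio.comp (tendsto_add_atTop_nat 1)) m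
  exact this.trans_lt (centralBinomSqRatio_succ_lt hm)

end Nat

/-- The central binomial coefficient satisfies `C(2m,m) > 2^{2m}·e^{−1/(8m)}/√(πm)`
for every integer `m ≥ 1`. -/
theorem central_binom_lower_bound (m : ℕ) (hm : 1 ≤ m) :
    ((2 * m).choose m : ℝ) >
      2 ^ (2 * m) * Real.exp (-1 / (8 * (m : ℝ))) / Real.sqrt (π * (m : ℝ)) := by
  have hratio := Nat.one_lt_centralBinomSqRatio hm
  rw [Nat.centralBinomSqRatio, one_lt_div (by positivity)] at hratio
  have hsq : (2 ^ (2 * m) * exp (-1 / (8 * (m : ℝ))) / √(π * m)) ^ 2 =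
      16 ^ m / (π * m * exp (1 / (4 * m))) := by
    have hm' : (0 : ℝ) < m := mod_cast hm
    rw [div_pow, mul_pow, sq_sqrt (by positivity), ← exp_nat_mul, pow_mul,
      show ((2 : ℕ) : ℝ) * (-1 / (8 * m)) = -(1 / (4 * m)) by field_simp; norm_num, exp_neg]
    field_simp
    rw [← pow_mul, mul_comm, pow_mul]
    norm_num
  rw [gt_iff_lt, ← Nat.centralBinom_eq_two_mul_choose]
  refine lt_of_pow_lt_pow_left₀ 2 (Nat.cast_nonneg _) ?_
  rw [hsq, div_lt_iff₀ (by positivity)]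
  linarith
end
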